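/- Fix β > 0. If (x,y) with x, y > 0 satisfies x²·cosh(β)^4 + y²·sinh(β)²·cosh(β) = x and x·y·sinh(β)·cosh(β)·(1+cosh(β)) = y, then we reach a contradiction; i.e., there is no fixed point with y ≠ 0. -/

import Mathlib

/-!
The second equation with `y ≠ 0` forces `x · sinh β cosh β (1 + cosh β) = 1`, while the first,
with its nonnegative `y²` term dropped, gives `x · cosh β ^ 4 ≤ 1`. Together these say
`cosh β ^ 3 ≤ sinh β (1 + cosh β)`, which fails for every real `β`: squaring and using
`sinh² = cosh² - 1` reduces it to a polynomial inequality in `cosh β ≥ 1`.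
-/

open Real

lemma mul_one_add_lt_pow_three_of_sq_sub_sq_eq_one {s c : ℝ} (hc : 1 ≤ c) (h : c ^ 2 - s ^ 2 = 1) :
    s * (1 + c) < c ^ 3 := by
  have ht : 0 ≤ c - 1 := sub_nonneg.2 hc
  -- in `t = c - 1`: `c⁶ - (c² - 1)(1 + c)² = (1 - t)² + 2t² + 14t³ + 14t⁴ + 6t⁵ + t⁶`
  have hsq : (s * (1 + c)) ^ 2 < (c ^ 3) ^ 2 := by
    rw [mul_pow, show s ^ 2 = c ^ 2 - 1 by linarith]
    nlinarith [sq_nonneg (c - 2), pow_nonneg ht 3, pow_nonneg ht 4, pow_nonneg ht 5, pow_nonneg ht 6]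
  exact (le_abs_self _).trans_lt (abs_lt_of_sq_lt_sq hsq (by positivity))

lemma Real.sinh_mul_one_add_cosh_lt_cosh_pow_three (β : ℝ) : sinh β * (1 + cosh β) < cosh β ^ 3 :=
  mul_one_add_lt_pow_three_of_sq_sub_sq_eq_one (one_le_cosh β) (by rw [cosh_sq β]; ring)

theorem stmt_4_general (β : ℝ) (x y : ℝ) (hx : 0 < x) (hy : 0 < y)
    (h1 : x ^ 2 * Real.cosh β ^ 4 + y ^ 2 * Real.sinh β ^ 2 * Real.cosh β = x)
    (h2 : x * y * (Real.sinh β * Real.cosh β * (1 + Real.cosh β)) = y) :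
    False := by
  have hxc : 0 < x * cosh β := mul_pos hx (cosh_pos β)
  have h_eq : x * cosh β * (sinh β * (1 + cosh β)) = 1 := by
    apply mul_right_cancel₀ hy.ne'
    linear_combination h2
  have h_le : x * cosh β * cosh β ^ 3 ≤ 1 := by
    have : 0 ≤ y ^ 2 * sinh β ^ 2 * cosh β := by positivity
    nlinarith
  linarith [mul_lt_mul_of_pos_left (sinh_mul_one_add_cosh_lt_cosh_pow_three β) hxc]

theorem stmt_4 (β : ℝ) (hβ : 0 < β) (x y : ℝ) (hx : 0 < x) (hy : 0 < y)
    (h1 : x ^ 2 * Real.cosh β ^ 4 + y ^ 2 * Real.sinh β ^ 2 * Real.cosh β = x)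
    (h2 : x * y * (Real.sinh β * Real.cosh β * (1 + Real.cosh β)) = y) :
    False :=
  stmt_4_general β x y hx hy h1 h2
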